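/- Let P, Q ∈ GL_3(F_2). Then P·J_3(F_2)·Q⁻¹ = J_3(F_2) if and only if both P and Q are lower triangular, where J_3(F_2) is the space of lower triangular trace-zero 3×3 matrices over F_2. Consequently, the number of subspaces of M_3(F_2) of the form P·J_3(F_2)·Q⁻¹ with P,Q ∈ GL_3(F_2) equals 441 = 7² × 3². -/
import Mathlib

/-- The space of lower triangular trace-zero `3 × 3` matrices over `F₂`, as a set. -/
def J3set : Set (Matrix (Fin 3) (Fin 3) (ZMod 2)) :=
  {M | M 0 1 = 0 ∧ M 0 2 = 0 ∧ M 1 2 = 0 ∧ M.trace = 0}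

set_option maxHeartbeats 1000000

abbrev Mat := Matrix (Fin 3) (Fin 3) (ZMod 2)

lemma memJ_iff (M : Mat) : M ∈ J3set ↔
    (M 0 1 = 0 ∧ M 0 2 = 0 ∧ M 1 2 = 0 ∧ M 0 0 + M 1 1 + M 2 2 = 0) := by
  simp [J3set, Matrix.trace_fin_three]

-- diag of invertible lower triangular is all ones
lemma diag_one (P : Mat) (hP : IsUnit P) (h1 : P 0 1 = 0) (h2 : P 0 2 = 0) (h3 : P 1 2 = 0) :
    P 0 0 = 1 ∧ P 1 1 = 1 ∧ P 2 2 = 1 := by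
  rw [Matrix.isUnit_iff_isUnit_det, Matrix.det_fin_three, h1, h2, h3] at hP
  revert hP
  generalize P 0 0 = x; generalize P 1 1 = y; generalize P 2 2 = z
  generalize P 1 0 = u; generalize P 2 0 = v; generalize P 2 1 = w
  revert x y z u v w; decide

lemma two_zmod (x : ZMod 2) : x + x = 0 := by revert x; decide

lemma L1 (a b c d e f m n x y z : ZMod 2) :
    (!![1,0,0;a,1,0;b,c,1] * !![m,0,0;x,n,0;y,z,m+n] * !![1,0,0;d,1,0;e,f,1] : Mat) 0 1 = 0 ∧
    (!![1,0,0;a,1,0;b,c,1] * !![m,0,0;x,n,0;y,z,m+n] * !![1,0,0;d,1,0;e,f,1] : Mat) 0 2 = 0 ∧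
    (!![1,0,0;a,1,0;b,c,1] * !![m,0,0;x,n,0;y,z,m+n] * !![1,0,0;d,1,0;e,f,1] : Mat) 1 2 = 0 ∧
    (!![1,0,0;a,1,0;b,c,1] * !![m,0,0;x,n,0;y,z,m+n] * !![1,0,0;d,1,0;e,f,1] : Mat) 0 0
    + (!![1,0,0;a,1,0;b,c,1] * !![m,0,0;x,n,0;y,z,m+n] * !![1,0,0;d,1,0;e,f,1] : Mat) 1 1
    + (!![1,0,0;a,1,0;b,c,1] * !![m,0,0;x,n,0;y,z,m+n] * !![1,0,0;d,1,0;e,f,1] : Mat) 2 2 = 0 := by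
  refine ⟨?_, ?_, ?_, ?_⟩ <;>
  · simp [Matrix.mul_fin_three]
    try ring_nf
    try { revert m n; decide }

lemma L2 (d e f : ZMod 2) :
    (!![1,0,0;d,1,0;e,f,1] : Mat) * !![1,0,0;d,1,0;d*f+e,f,1] = 1 ∧
    (!![1,0,0;d,1,0;d*f+e,f,1] : Mat) * !![1,0,0;d,1,0;e,f,1] = 1 := by
  constructor <;>
  · ext i j
    fin_cases i <;> fin_cases j <;> simp [Matrix.mul_fin_three, Matrix.one_fin_three] <;>
      (try ring_nf) <;> (try { revert d e f ; decide })

lemma tripleJ (a b c d e f : ZMod 2) (M : Mat) (hM : M ∈ J3set) :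
    !![1,0,0;a,1,0;b,c,1] * M * !![1,0,0;d,1,0;e,f,1] ∈ J3set := by
  rw [memJ_iff] at hM ⊢
  obtain ⟨h1, h2, h3, h4⟩ := hM
  have hM22 : M 2 2 = M 0 0 + M 1 1 := by
    revert h4
    generalize M 0 0 = u; generalize M 1 1 = v; generalize M 2 2 = w
    revert u v w; decide
  rw [Matrix.eta_fin_three M, h1, h2, h3, hM22]
  exact L1 a b c d e f (M 0 0) (M 1 1) (M 1 0) (M 2 0) (M 2 1)

lemma backward (P Q : Mat) (hP : IsUnit P) (hQ : IsUnit Q)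
    (hp1 : P 0 1 = 0) (hp2 : P 0 2 = 0) (hp3 : P 1 2 = 0)
    (hq1 : Q 0 1 = 0) (hq2 : Q 0 2 = 0) (hq3 : Q 1 2 = 0) :
    (fun M => P * M * Q⁻¹) '' J3set = J3set := by
  obtain ⟨hP0, hP1, hP2⟩ := diag_one P hP hp1 hp2 hp3
  obtain ⟨hQ0, hQ1, hQ2⟩ := diag_one Q hQ hq1 hq2 hq3
  have hPe : P = !![1,0,0; P 1 0, 1, 0; P 2 0, P 2 1, 1] := by
    conv_lhs => rw [Matrix.eta_fin_three P]
    rw [hp1, hp2, hp3, hP0, hP1, hP2]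
  have hQe : Q = !![1,0,0; Q 1 0, 1, 0; Q 2 0, Q 2 1, 1] := by
    conv_lhs => rw [Matrix.eta_fin_three Q]
    rw [hq1, hq2, hq3, hQ0, hQ1, hQ2]
  have hQinv : Q⁻¹ = !![1,0,0; Q 1 0, 1, 0; Q 1 0 * Q 2 1 + Q 2 0, Q 2 1, 1] := by
    have h := (L2 (Q 1 0) (Q 2 0) (Q 2 1)).1
    rw [← hQe] at h
    exact Matrix.inv_eq_right_inv h
  have hPinv : P⁻¹ = !![1,0,0; P 1 0, 1, 0; P 1 0 * P 2 1 + P 2 0, P 2 1, 1] := by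
    have h := (L2 (P 1 0) (P 2 0) (P 2 1)).1
    rw [← hPe] at h
    exact Matrix.inv_eq_right_inv h
  have hPd : IsUnit P.det := (Matrix.isUnit_iff_isUnit_det P).1 hP
  have hQd : IsUnit Q.det := (Matrix.isUnit_iff_isUnit_det Q).1 hQ
  apply Set.Subset.antisymm
  · rintro _ ⟨M, hM, rfl⟩
    show P * M * Q⁻¹ ∈ J3set
    rw [hQinv, hPe]
    exact tripleJ _ _ _ _ _ _ M hM
  · intro N hN
    refine ⟨P⁻¹ * N * Q, ?_, ?_⟩
    · rw [hPinv, hQe]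
      exact tripleJ _ _ _ _ _ _ N hN
    · show P * (P⁻¹ * N * Q) * Q⁻¹ = N
      rw [← mul_assoc P, ← mul_assoc P, Matrix.mul_nonsing_inv P hPd, one_mul,
        mul_assoc, Matrix.mul_nonsing_inv Q hQd, mul_one]

lemma entry_eq {A B : Mat} (h : A = B) (i j : Fin 3) : A i j = B i j := by rw [h]

lemma forward (P Q : Mat) (hP : IsUnit P) (hQ : IsUnit Q)
    (H : (fun M => P * M * Q⁻¹) '' J3set = J3set) :
    (P 0 1 = 0 ∧ P 0 2 = 0 ∧ P 1 2 = 0) ∧ (Q 0 1 = 0 ∧ Q 0 2 = 0 ∧ Q 1 2 = 0) := by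
  have hQd : IsUnit Q.det := (Matrix.isUnit_iff_isUnit_det Q).1 hQ
  have F1 : ∀ M ∈ J3set, ∃ N ∈ J3set, P * M = N * Q := by
    intro M hM
    refine ⟨P * M * Q⁻¹, ?_, ?_⟩
    · rw [← H]; exact ⟨M, hM, rfl⟩
    · rw [mul_assoc, Matrix.nonsing_inv_mul Q hQd, mul_one]
  have F2 : ∀ N ∈ J3set, ∃ M ∈ J3set, N * Q = P * M := by
    intro N hN
    rw [← H] at hN
    obtain ⟨M, hM, hMe⟩ := hN
    refine ⟨M, hM, ?_⟩
    simp only at hMe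
    rw [← hMe, mul_assoc, Matrix.nonsing_inv_mul Q hQd, mul_one]
  have memE10 : (!![0,0,0;1,0,0;0,0,0] : Mat) ∈ J3set := (memJ_iff _).2 (by decide)
  have memE20 : (!![0,0,0;0,0,0;1,0,0] : Mat) ∈ J3set := (memJ_iff _).2 (by decide)
  have memE21 : (!![0,0,0;0,0,0;0,1,0] : Mat) ∈ J3set := (memJ_iff _).2 (by decide)
  have memD1 : (!![1,0,0;0,0,0;0,0,1] : Mat) ∈ J3set := (memJ_iff _).2 (by decide)
  have memD2 : (!![0,0,0;0,1,0;0,0,1] : Mat) ∈ J3set := (memJ_iff _).2 (by decide)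
  -- Step 1 : Q 0 2 = 0
  have hq02 : Q 0 2 = 0 := by
    by_contra hq
    obtain ⟨M, hM, hEq⟩ := F2 _ memE10
    obtain ⟨M', hM', hEq'⟩ := F2 _ memE20
    rw [memJ_iff] at hM hM'
    have e1 := entry_eq hEq 1 2
    have e2 := entry_eq hEq 2 2
    have e3 := entry_eq hEq' 2 2
    simp [Matrix.mul_apply, Fin.sum_univ_three, hM.1, hM.2.1, hM.2.2.1,
      hM'.1, hM'.2.1, hM'.2.2.1] at e1 e2 e3
    revert e1 e2 e3 hq
    generalize Q 0 2 = a; generalize P 1 2 = b; generalize P 2 2 = c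
    generalize M 2 2 = u; generalize M' 2 2 = v
    revert a b c u v; decide
  -- Step 2 : Q 1 2 = 0
  have hq12 : Q 1 2 = 0 := by
    by_contra hq
    obtain ⟨M, hM, hEq⟩ := F2 _ memE21
    obtain ⟨M', hM', hEq'⟩ := F2 _ memD2
    rw [memJ_iff] at hM hM'
    have e1 := entry_eq hEq 2 2
    have e2 := entry_eq hEq 1 2
    have e3 := entry_eq hEq' 1 2
    simp [Matrix.mul_apply, Fin.sum_univ_three, hM.1, hM.2.1, hM.2.2.1,
      hM'.1, hM'.2.1, hM'.2.2.1] at e1 e2 e3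
    revert e1 e2 e3 hq
    generalize Q 1 2 = a; generalize P 1 2 = b; generalize P 2 2 = c
    generalize M 2 2 = u; generalize M' 2 2 = v
    revert a b c u v; decide
  -- Step 3 : P 0 2 = 0 and P 1 2 = 0
  have hp02 : P 0 2 = 0 ∧ P 1 2 = 0 := by
    obtain ⟨N, hN, hEq⟩ := F1 _ memD1
    rw [memJ_iff] at hN
    have e1 := entry_eq hEq 0 2
    have e2 := entry_eq hEq 1 2
    simp [Matrix.mul_apply, Fin.sum_univ_three, hN.1, hN.2.1, hN.2.2.1,
      hq02, hq12] at e1 e2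
    exact ⟨e1, e2⟩
  -- Step 5 : Q 0 1 = 0
  have hq01 : Q 0 1 = 0 := by
    by_contra hq
    obtain ⟨M, hM, hEq⟩ := F2 _ memE10
    obtain ⟨M', hM', hEq'⟩ := F2 _ memD1
    rw [memJ_iff] at hM hM'
    have e1 := entry_eq hEq 0 1
    have e2 := entry_eq hEq 1 1
    have e3 := entry_eq hEq' 0 1
    simp [Matrix.mul_apply, Fin.sum_univ_three, hM.1, hM.2.1, hM.2.2.1,
      hM'.1, hM'.2.1, hM'.2.2.1, hp02.1, hp02.2] at e1 e2 e3
    revert e1 e2 e3 hq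
    generalize Q 0 1 = a; generalize P 0 1 = b; generalize P 1 1 = c
    generalize M 1 1 = u; generalize M' 1 1 = v
    revert a b c u v; decide
  -- Step 6 : P 0 1 = 0
  have hp01 : P 0 1 = 0 := by
    obtain ⟨N, hN, hEq⟩ := F1 _ memD2
    rw [memJ_iff] at hN
    have e1 := entry_eq hEq 0 1
    simp [Matrix.mul_apply, Fin.sum_univ_three, hN.1, hN.2.1, hN.2.2.1, hq01] at e1
    exact e1
  exact ⟨⟨hp01, hp02.1, hp02.2⟩, ⟨hq01, hq02, hq12⟩⟩

lemma part1 : ∀ P Q : Mat, IsUnit P → IsUnit Q →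
      ((fun M => P * M * Q⁻¹) '' J3set = J3set ↔
        (P 0 1 = 0 ∧ P 0 2 = 0 ∧ P 1 2 = 0) ∧
        (Q 0 1 = 0 ∧ Q 0 2 = 0 ∧ Q 1 2 = 0)) := by
  intro P Q hP hQ
  constructor
  · exact forward P Q hP hQ
  · rintro ⟨⟨a, b, c⟩, ⟨d, e, f⟩⟩
    exact backward P Q hP hQ a b c d e f

lemma L2ax : ∀ d e f : ZMod 2,
    (!![1,0,0;d,1,0;e,f,1] : Mat) * !![1,0,0;d,1,0;d*f+e,f,1] = 1 ∧
    (!![1,0,0;d,1,0;d*f+e,f,1] : Mat) * !![1,0,0;d,1,0;e,f,1] = 1 := L2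

noncomputable section

instance actSMul : SMul (Matˣ × Matˣ) (Set Mat) :=
  ⟨fun g S => (fun M => (g.1 : Mat) * M * ((g.2⁻¹ : Matˣ) : Mat)) '' S⟩

lemma smul_def (g : Matˣ × Matˣ) (S : Set Mat) :
    g • S = (fun M => (g.1 : Mat) * M * ((g.2⁻¹ : Matˣ) : Mat)) '' S := rfl

instance actMul : MulAction (Matˣ × Matˣ) (Set Mat) where
  one_smul S := by
    rw [smul_def]
    simp
  mul_smul a b S := by
    rw [smul_def, smul_def, smul_def, Set.image_image]
    apply Set.image_congr'
    intro M
    simp [mul_assoc]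

lemma smul_eq_image (g : Matˣ × Matˣ) (S : Set Mat) :
    g • S = (fun M => (g.1 : Mat) * M * ((g.2 : Mat))⁻¹) '' S := by
  rw [smul_def, Matrix.coe_units_inv]

lemma setEq : {S : Set Mat |
      ∃ P Q : Mat, IsUnit P ∧ IsUnit Q ∧
        S = (fun M => P * M * Q⁻¹) '' J3set} = MulAction.orbit (Matˣ × Matˣ) J3set := by
  ext S
  rw [Set.mem_setOf_eq, MulAction.mem_orbit_iff]
  constructor
  · rintro ⟨P, Q, hP, hQ, rfl⟩
    refine ⟨(hP.unit, hQ.unit), ?_⟩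
    rw [smul_eq_image]
    rw [show ((hP.unit, hQ.unit) : Matˣ × Matˣ).1 = hP.unit from rfl,
      show ((hP.unit, hQ.unit) : Matˣ × Matˣ).2 = hQ.unit from rfl,
      IsUnit.unit_spec hP, IsUnit.unit_spec hQ]
  · rintro ⟨g, hg⟩
    exact ⟨g.1, g.2, g.1.isUnit, g.2.isUnit, by rw [← hg, smul_eq_image]⟩

def unip (a b c : ZMod 2) : Matˣ :=
  ⟨!![1,0,0;a,1,0;b,c,1], !![1,0,0;a,1,0;a*c+b,c,1], (L2ax a b c).1, (L2ax a b c).2⟩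

lemma unip_entries : ∀ a b c : ZMod 2,
    !![1,0,0;a,1,0;b,c,1] 0 1 = 0 ∧ !![1,0,0;a,1,0;b,c,1] 0 2 = 0 ∧
    !![1,0,0;a,1,0;b,c,1] 1 2 = 0 ∧ !![1,0,0;a,1,0;b,c,1] 1 0 = a ∧
    !![1,0,0;a,1,0;b,c,1] 2 0 = b ∧ !![1,0,0;a,1,0;b,c,1] 2 1 = c := by decide

lemma mem_stab_iff (g : Matˣ × Matˣ) :
    g ∈ MulAction.stabilizer (Matˣ × Matˣ) J3set ↔
      (((g.1 : Mat) 0 1 = 0 ∧ (g.1 : Mat) 0 2 = 0 ∧ (g.1 : Mat) 1 2 = 0) ∧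
       ((g.2 : Mat) 0 1 = 0 ∧ (g.2 : Mat) 0 2 = 0 ∧ (g.2 : Mat) 1 2 = 0)) := by
  rw [MulAction.mem_stabilizer_iff, smul_eq_image]
  exact part1 g.1 g.2 g.1.isUnit g.2.isUnit

def stabEquiv : MulAction.stabilizer (Matˣ × Matˣ) J3set ≃
    ((ZMod 2 × ZMod 2 × ZMod 2) × (ZMod 2 × ZMod 2 × ZMod 2)) where
  toFun g := (((g.1.1 : Mat) 1 0, (g.1.1 : Mat) 2 0, (g.1.1 : Mat) 2 1),
              ((g.1.2 : Mat) 1 0, (g.1.2 : Mat) 2 0, (g.1.2 : Mat) 2 1))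
  invFun t := ⟨(unip t.1.1 t.1.2.1 t.1.2.2, unip t.2.1 t.2.2.1 t.2.2.2), by
    rw [mem_stab_iff]
    obtain ⟨h1, h2, h3, _, _, _⟩ := unip_entries t.1.1 t.1.2.1 t.1.2.2
    obtain ⟨h4, h5, h6, _, _, _⟩ := unip_entries t.2.1 t.2.2.1 t.2.2.2
    exact ⟨⟨h1, h2, h3⟩, ⟨h4, h5, h6⟩⟩⟩
  left_inv g := by
    obtain ⟨⟨u, v⟩, hg⟩ := g
    rw [mem_stab_iff] at hg
    obtain ⟨⟨h1, h2, h3⟩, ⟨h4, h5, h6⟩⟩ := hg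
    obtain ⟨d1, d2, d3⟩ := diag_one u u.isUnit h1 h2 h3
    obtain ⟨e1, e2, e3⟩ := diag_one v v.isUnit h4 h5 h6
    apply Subtype.ext
    apply Prod.ext <;> apply Units.ext <;> simp only
    · conv_lhs => rw [show (unip ((u : Mat) 1 0) ((u : Mat) 2 0) ((u : Mat) 2 1) : Mat)
        = !![1,0,0;(u : Mat) 1 0,1,0;(u : Mat) 2 0,(u : Mat) 2 1,1] from rfl]
      conv_rhs => rw [Matrix.eta_fin_three (u : Mat)]
      rw [h1, h2, h3, d1, d2, d3]
    · conv_lhs => rw [show (unip ((v : Mat) 1 0) ((v : Mat) 2 0) ((v : Mat) 2 1) : Mat)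
        = !![1,0,0;(v : Mat) 1 0,1,0;(v : Mat) 2 0,(v : Mat) 2 1,1] from rfl]
      conv_rhs => rw [Matrix.eta_fin_three (v : Mat)]
      rw [h4, h5, h6, e1, e2, e3]
  right_inv t := by
    obtain ⟨_, _, _, h1, h2, h3⟩ := unip_entries t.1.1 t.1.2.1 t.1.2.2
    obtain ⟨_, _, _, h4, h5, h6⟩ := unip_entries t.2.1 t.2.2.1 t.2.2.2
    simp only [unip]
    exact Prod.ext (by simp [h1, h2, h3]) (by simp [h4, h5, h6])

lemma cardStab : Nat.card (MulAction.stabilizer (Matˣ × Matˣ) J3set) = 64 := by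
  rw [Nat.card_congr stabEquiv]
  simp [Nat.card_eq_fintype_card]

lemma cardG : Nat.card (Matˣ × Matˣ) = 28224 := by
  rw [Nat.card_prod]
  have : Nat.card (Matˣ) = 168 := by
    have h := Matrix.card_GL_field (𝔽 := ZMod 2) 3
    rw [h]
    simp [Fin.prod_univ_three]
  rw [this]

lemma part2 : Nat.card {S : Set Mat |
      ∃ P Q : Mat, IsUnit P ∧ IsUnit Q ∧
        S = (fun M => P * M * Q⁻¹) '' J3set} = 441 := by
  rw [setEq, Nat.card_congr (MulAction.orbitEquivQuotientStabilizer (Matˣ × Matˣ) J3set)]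
  have h := Subgroup.card_eq_card_quotient_mul_card_subgroup
    (MulAction.stabilizer (Matˣ × Matˣ) J3set)
  rw [cardStab, cardG] at h
  omega

theorem stmt_18 :
    (∀ P Q : Matrix (Fin 3) (Fin 3) (ZMod 2), IsUnit P → IsUnit Q →
      ((fun M => P * M * Q⁻¹) '' J3set = J3set ↔
        (P 0 1 = 0 ∧ P 0 2 = 0 ∧ P 1 2 = 0) ∧
        (Q 0 1 = 0 ∧ Q 0 2 = 0 ∧ Q 1 2 = 0))) ∧
    Nat.card {S : Set (Matrix (Fin 3) (Fin 3) (ZMod 2)) |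
      ∃ P Q : Matrix (Fin 3) (Fin 3) (ZMod 2), IsUnit P ∧ IsUnit Q ∧
        S = (fun M => P * M * Q⁻¹) '' J3set} = 441 :=
  ⟨part1, part2⟩
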